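/- For every real number e with e < d, the function x ↦ x^e · F(x) tends to +∞ as x tends to 0 from the right. -/

import Mathlib

/-!
Cut `(0, c]` into the annuli `(ρ^(k+1) c, ρ^k c]`. Iterating the self-similarity gives the
`k`-th annulus the mass `ℓ^k · μ((ρc, c])`, and `ℓ^k = (ρ^k)^(-d)`. For
`ρ^(n+2) c < x ≤ ρ^(n+1) c` the ray `[x, ∞)` contains the `n`-th annulus, so
`F x ≥ K x^(-d)` with `K > 0`, and `x^e F x ≥ K x^(e-d) → ∞` for `e < d`.
-/

open MeasureTheory Set Filter

theorem rpow_neg_log_div_log_inv {ρ ℓ : ℝ} (hρ0 : 0 < ρ) (hρ1 : ρ ≠ 1) (hℓ : 0 < ℓ) :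
    ρ ^ (-(Real.log ℓ / Real.log (1 / ρ))) = ℓ := by
  rw [one_div, Real.log_inv, div_neg, neg_neg, ← Real.logb, Real.rpow_logb hρ0 hρ1 hℓ]

theorem tendsto_rpow_mul_atTop_of_le {f : ℝ → ℝ} {K d e : ℝ} (hK : 0 < K) (he : e < d)
    (hf : ∀ᶠ x in nhdsWithin 0 (Ioi 0), K * x ^ (-d) ≤ f x) :
    Tendsto (fun x : ℝ => x ^ e * f x) (nhdsWithin 0 (Ioi 0)) atTop := by
  refine tendsto_atTop_mono' _ ?_
    ((tendsto_rpow_neg_nhdsGT_zero (sub_neg.2 he)).const_mul_atTop hK)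
  filter_upwards [hf, self_mem_nhdsWithin] with x hfx (hx : 0 < x)
  calc K * x ^ (e - d) = x ^ e * (K * x ^ (-d)) := by
        rw [sub_eq_add_neg, Real.rpow_add hx]; ring
    _ ≤ x ^ e * f x := by gcongr

section SelfSimilar

variable {μ : Measure ℝ} {ρ ℓ c : ℝ}
  (hscale : ∀ A : Set ℝ, MeasurableSet A → A ⊆ Ioc 0 c →
    μ ((fun a => ρ * a) '' A) = ENNReal.ofReal ℓ * μ A)
include hscale

theorem measure_image_pow_mul (hρ0 : 0 < ρ) (hρ1 : ρ ≤ 1) {A : Set ℝ} (hA : MeasurableSet A)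
    (hAc : A ⊆ Ioc 0 c) (k : ℕ) :
    μ ((fun a => ρ ^ k * a) '' A) = ENNReal.ofReal ℓ ^ k * μ A := by
  induction k with
  | zero => simp
  | succ k ih =>
    have hmeas : MeasurableSet ((fun a => ρ ^ k * a) '' A) :=
      hA.const_smul_of_ne_zero (pow_ne_zero k hρ0.ne')
    have hsub : (fun a => ρ ^ k * a) '' A ⊆ Ioc 0 c := by
      rintro _ ⟨a, ha, rfl⟩
      obtain ⟨ha0, hac⟩ := hAc ha
      exact ⟨by positivity, (mul_le_of_le_one_left ha0.le (pow_le_one₀ hρ0.le hρ1)).trans hac⟩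
    rw [pow_succ' (ENNReal.ofReal ℓ), mul_assoc, ← ih, ← hscale _ hmeas hsub, image_image]
    simp only [pow_succ', mul_assoc]

theorem measure_Ioc_pow_mul (hρ0 : 0 < ρ) (hρ1 : ρ ≤ 1) (hc : 0 < c) (k : ℕ) :
    μ (Ioc (ρ ^ (k + 1) * c) (ρ ^ k * c)) = ENNReal.ofReal ℓ ^ k * μ (Ioc (ρ * c) c) := by
  have hsub : Ioc (ρ * c) c ⊆ Ioc 0 c := Ioc_subset_Ioc_left (by positivity)
  rw [← measure_image_pow_mul hscale hρ0 hρ1 measurableSet_Ioc hsub,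
    image_mul_left_Ioc (by positivity), pow_succ, mul_assoc]

theorem div_sq_mul_rpow_neg_le_measure_Ici (hρ0 : 0 < ρ) (hρ1 : ρ < 1) (hc : 0 < c)
    (hℓ : 0 < ℓ) {d : ℝ} (hd : 0 ≤ d) (hρd : ρ ^ (-d) = ℓ) {x : ℝ} (hx0 : 0 < x) (hxρc : x ≤ ρ * c)
    (hfin : μ (Ici x) ≠ ⊤) :
    (μ (Ioc (ρ * c) c)).toReal / ℓ ^ 2 * (x / c) ^ (-d) ≤ (μ (Ici x)).toReal := by
  set m := (μ (Ioc (ρ * c) c)).toReal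
  obtain ⟨n, hn_lt, hn_le⟩ := exists_nat_pow_near_of_lt_one (div_pos hx0 (mul_pos hρ0 hc))
    ((div_le_one (mul_pos hρ0 hc)).2 hxρc) hρ0 hρ1
  rw [div_le_iff₀ (mul_pos hρ0 hc), ← mul_assoc, ← pow_succ] at hn_le
  rw [lt_div_iff₀ (mul_pos hρ0 hc), ← mul_assoc, ← pow_succ, ← lt_div_iff₀ hc] at hn_lt
  have hannulus : ℓ ^ n * m ≤ (μ (Ici x)).toReal := by
    have hsub : Ioc (ρ ^ (n + 1) * c) (ρ ^ n * c) ⊆ Ici x := fun y hy => hn_le.trans hy.1.le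
    have := ENNReal.toReal_mono hfin (measure_mono hsub)
    rwa [measure_Ioc_pow_mul hscale hρ0 hρ1.le hc, ENNReal.toReal_mul, ENNReal.toReal_pow,
      ENNReal.toReal_ofReal hℓ.le] at this
  have hpow : (x / c) ^ (-d) ≤ ℓ ^ (n + 2) :=
    calc (x / c) ^ (-d) ≤ (ρ ^ (n + 2)) ^ (-d) :=
          Real.rpow_le_rpow_of_nonpos (by positivity) hn_lt.le (neg_nonpos.2 hd)
      _ = ℓ ^ (n + 2) := by rw [← Real.rpow_pow_comm hρ0.le, hρd]
  calc m / ℓ ^ 2 * (x / c) ^ (-d) ≤ m / ℓ ^ 2 * ℓ ^ (n + 2) := by gcongr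
    _ = ℓ ^ n * m := by field_simp; ring
    _ ≤ (μ (Ici x)).toReal := hannulus

end SelfSimilar

theorem ph_dimension_lower
    (ρ ℓ c : ℝ) (hρ : ρ ∈ Set.Ioo (0 : ℝ) 1) (hℓ : 1 < ℓ) (hc : 0 < c)
    (μ : Measure ℝ)
    (hfin : ∀ x : ℝ, 0 < x → μ (Set.Ici x) < ⊤)
    (hpos : 0 < μ (Set.Ioc (ρ * c) c))
    (hscale : ∀ A : Set ℝ, MeasurableSet A → A ⊆ Set.Ioc 0 c →
      μ ((fun a => ρ * a) '' A) = ENNReal.ofReal ℓ * μ A)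
    (F : ℝ → ℝ) (hF : ∀ x : ℝ, F x = (μ (Set.Ici x)).toReal)
    (d : ℝ) (hd : d = Real.log ℓ / Real.log (1 / ρ)) :
    ∀ e : ℝ, e < d →
      Tendsto (fun x : ℝ => x ^ e * F x) (nhdsWithin 0 (Set.Ioi 0)) atTop := by
  intro e he
  obtain ⟨hρ0, hρ1⟩ := hρ
  have hℓ0 : 0 < ℓ := one_pos.trans hℓ
  have hd0 : 0 ≤ d := hd ▸ div_nonneg (Real.log_nonneg hℓ.le)
    (Real.log_nonneg (one_le_one_div hρ0 hρ1.le))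
  have hρd : ρ ^ (-d) = ℓ := hd ▸ rpow_neg_log_div_log_inv hρ0 hρ1.ne hℓ0
  set m := (μ (Ioc (ρ * c) c)).toReal
  have hm : 0 < m := ENNReal.toReal_pos hpos.ne'
    (ne_top_of_le_ne_top (hfin _ (mul_pos hρ0 hc)).ne
      (measure_mono (Ioc_subset_Ioi_self.trans Ioi_subset_Ici_self)))
  refine tendsto_rpow_mul_atTop_of_le (K := m / ℓ ^ 2 * c ^ d) (by positivity) he ?_
  filter_upwards [Ioo_mem_nhdsGT (mul_pos hρ0 hc)] with x ⟨hx0, hxρc⟩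
  have hbound := div_sq_mul_rpow_neg_le_measure_Ici hscale hρ0 hρ1 hc hℓ0 hd0 hρd hx0
    hxρc.le (hfin x hx0).ne
  rwa [Real.div_rpow hx0.le hc.le, Real.rpow_neg hc.le, div_inv_eq_mul, mul_comm _ (c ^ d),
    ← mul_assoc, ← hF] at hbound
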